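/- arXiv:2301.03318 — 2 statements merged into one kernel-verified Lean document; each statement's English description precedes it below -/
import Mathlib

section
/- Fix M ≥ 1, labels y ∈ {0,1}^M, and a positional-invariant performance measure μ. For j ∈ {0,…,M} let E_j(y) := (1/C(M,j)) Σ_{ŷ∈Y_j} μ(ŷ, y), and let k* ∈ argmin_{j∈{0,…,M}} E_j(y). Then the Dutch Draw classifier DD_{k*} (the uniform distribution on Y_{k*}) is permutation-optimal for minimization among all input-independent classifiers: for every probability mass function h on {0,1}^M, Perf_{μ,y}(h) ≥ Perf_{μ,y}(DD_{k*}) = E_{k*}(y). -/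
/-- `Yset M j`: binary vectors of length `M` (functions `Fin M → Bool`) with exactly `j` ones. -/
def Yset (M j : ℕ) : Finset (Fin M → Bool) :=
  Finset.univ.filter (fun v => (Finset.univ.filter (fun i => v i = true)).card = j)

/-- A performance measure is positional-invariant if permuting predictions and labels
simultaneously leaves it unchanged. -/
def PosInvariant (M : ℕ) (μ : (Fin M → Bool) → (Fin M → Bool) → ℝ) : Prop :=
  ∀ (π : Equiv.Perm (Fin M)) (yhat y : Fin M → Bool), μ (yhat ∘ ⇑π) (y ∘ ⇑π) = μ yhat y

/-- Group average `E_j(y)`: the mean of `μ(yhat, y)` over `yhat ∈ Y_j`. -/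
noncomputable def Egroup (M : ℕ) (μ : (Fin M → Bool) → (Fin M → Bool) → ℝ)
    (y : Fin M → Bool) (j : ℕ) : ℝ :=
  (1 / (M.choose j : ℝ)) * ∑ yhat ∈ Yset M j, μ yhat y

open Finset

section aux
variable {M : ℕ}

/-- number of ones -/
def cnt (M : ℕ) (v : Fin M → Bool) : ℕ := (Finset.univ.filter (fun i => v i = true)).card

lemma mem_Yset_iff {j : ℕ} {v : Fin M → Bool} : v ∈ Yset M j ↔ cnt M v = j := by
  simp [Yset, cnt]

lemma cnt_le (v : Fin M → Bool) : cnt M v ≤ M := by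
  simpa [cnt] using (Finset.card_filter_le Finset.univ (fun i => v i = true))

lemma cnt_comp_perm (v : Fin M → Bool) (π : Equiv.Perm (Fin M)) :
    cnt M (v ∘ ⇑π) = cnt M v := by
  unfold cnt
  apply Finset.card_bij (fun i _ => π i)
  · intro a ha; simp only [mem_filter, mem_univ, true_and, Function.comp] at ha ⊢; exact ha
  · intro a _ b _ hab; exact π.injective hab
  · intro b hb
    refine ⟨π⁻¹ b, ?_, by simp⟩
    simp only [mem_filter, mem_univ, true_and, Function.comp] at hb ⊢
    simpa using hb

lemma exists_perm_comp (v w : Fin M → Bool) (h : cnt M v = cnt M w) :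
    ∃ σ : Equiv.Perm (Fin M), v ∘ ⇑σ = w := by
  classical
  have hcv : ∀ u : Fin M → Bool, Fintype.card {i // u i = true} = cnt M u := by
    intro u; simp [cnt, Fintype.card_subtype]
  have hc : Fintype.card {i // w i = true} = Fintype.card {i // v i = true} := by
    rw [hcv, hcv, h]
  have hc' : Fintype.card {i // ¬ w i = true} = Fintype.card {i // ¬ v i = true} := by
    rw [Fintype.card_subtype_compl, Fintype.card_subtype_compl, hc]
  obtain e := Fintype.equivOfCardEq hc
  obtain f := Fintype.equivOfCardEq hc'
  refine ⟨Equiv.subtypeCongr e f, ?_⟩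
  funext i
  by_cases hi : w i = true
  · have : (Equiv.subtypeCongr e f) i = (e ⟨i, hi⟩ : Fin M) := by
      simp [Equiv.subtypeCongr, hi]
    simp only [Function.comp, this]
    rw [(e ⟨i, hi⟩).2, hi]
  · have : (Equiv.subtypeCongr e f) i = (f ⟨i, hi⟩ : Fin M) := by
      simp [Equiv.subtypeCongr, hi]
    simp only [Function.comp, this]
    have h2 := (f ⟨i, hi⟩).2
    simp only [Bool.not_eq_true] at h2 hi
    rw [h2, hi]

lemma card_Yset (M j : ℕ) : (Yset M j).card = M.choose j := by
  classical
  have : (Yset M j).card = (Finset.univ.powersetCard j (α := Fin M)).card := by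
    apply Finset.card_bij (fun v _ => Finset.univ.filter (fun i => v i = true))
    · intro v hv
      simp only [Finset.mem_powersetCard]
      exact ⟨Finset.filter_subset _ _, (mem_Yset_iff.mp hv)⟩
    · intro a ha b hb hab
      funext i
      have := Finset.ext_iff.mp hab i
      simp only [mem_filter, mem_univ, true_and] at this
      cases ha' : a i <;> cases hb' : b i <;> simp_all
    · intro s hs
      refine ⟨fun i => decide (i ∈ s), ?_, ?_⟩
      · rw [mem_Yset_iff]
        simp only [Finset.mem_powersetCard] at hs
        simp only [cnt, decide_eq_true_eq]
        rw [← hs.2]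
        congr 1
        ext i; simp
      · ext i; simp
  rw [this, Finset.card_powersetCard]
  simp

end aux

section core

variable {M : ℕ} {μ : (Fin M → Bool) → (Fin M → Bool) → ℝ} {y : Fin M → Bool}

lemma sum_perm_const (hμ : PosInvariant M μ) {j : ℕ} {v w : Fin M → Bool}
    (hv : v ∈ Yset M j) (hw : w ∈ Yset M j) :
    ∑ π : Equiv.Perm (Fin M), μ w (y ∘ ⇑π) = ∑ π : Equiv.Perm (Fin M), μ v (y ∘ ⇑π) := by
  rw [mem_Yset_iff] at hv hw
  obtain ⟨σ, hσ⟩ := exists_perm_comp v w (hv.trans hw.symm)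
  have step : ∀ π : Equiv.Perm (Fin M), μ w (y ∘ ⇑π) = μ v (y ∘ ⇑(π * σ⁻¹)) := by
    intro π
    have h1 := hμ σ v ((y ∘ ⇑π) ∘ ⇑σ⁻¹)
    have h2 : ((y ∘ ⇑π) ∘ ⇑σ⁻¹) ∘ ⇑σ = y ∘ ⇑π := by
      funext i; simp [Function.comp]
    rw [h2, hσ] at h1
    rw [h1]
    congr 1
  calc ∑ π : Equiv.Perm (Fin M), μ w (y ∘ ⇑π)
      = ∑ π : Equiv.Perm (Fin M), μ v (y ∘ ⇑(π * σ⁻¹)) := by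
        exact Finset.sum_congr rfl (fun π _ => step π)
    _ = ∑ π : Equiv.Perm (Fin M), μ v (y ∘ ⇑π) :=
        Fintype.sum_equiv (Equiv.mulRight σ⁻¹) _ _ (fun x => rfl)

lemma sum_group (hμ : PosInvariant M μ) (j : ℕ) :
    ∑ w ∈ Yset M j, ∑ π : Equiv.Perm (Fin M), μ w (y ∘ ⇑π)
      = (M.factorial : ℝ) * ∑ w ∈ Yset M j, μ w y := by
  rw [Finset.sum_comm]
  have inner : ∀ π : Equiv.Perm (Fin M),
      ∑ w ∈ Yset M j, μ w (y ∘ ⇑π) = ∑ w ∈ Yset M j, μ w y := by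
    intro π
    have step : ∀ w : Fin M → Bool, μ w (y ∘ ⇑π) = μ (w ∘ ⇑π⁻¹) y := by
      intro w
      have h1 := hμ π (w ∘ ⇑π⁻¹) y
      have h2 : (w ∘ ⇑π⁻¹) ∘ ⇑π = w := by funext i; simp [Function.comp]
      rw [h2] at h1
      exact h1
    calc ∑ w ∈ Yset M j, μ w (y ∘ ⇑π) = ∑ w ∈ Yset M j, μ (w ∘ ⇑π⁻¹) y :=
          Finset.sum_congr rfl (fun w _ => step w)
      _ = ∑ w ∈ Yset M j, μ w y := by
          apply Finset.sum_nbij' (fun w => w ∘ ⇑π⁻¹) (fun w => w ∘ ⇑π)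
          · intro a ha
            rw [mem_Yset_iff] at ha ⊢
            rw [cnt_comp_perm, ha]
          · intro a ha
            rw [mem_Yset_iff] at ha ⊢
            rw [cnt_comp_perm, ha]
          · intro a _; funext i; simp [Function.comp]
          · intro a _; funext i; simp [Function.comp]
          · intro a _; rfl
  rw [Finset.sum_congr rfl (fun π _ => inner π)]
  rw [Finset.sum_const, nsmul_eq_mul]
  congr 1
  simp [Fintype.card_perm]

lemma avg_perm_eq (hμ : PosInvariant M μ) (v : Fin M → Bool) :
    (1 / (M.factorial : ℝ)) * ∑ π : Equiv.Perm (Fin M), μ v (y ∘ ⇑π)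
      = Egroup M μ y (cnt M v) := by
  set j := cnt M v with hj
  have hv : v ∈ Yset M j := mem_Yset_iff.mpr rfl
  have hcard : ((Yset M j).card : ℝ) * ∑ π : Equiv.Perm (Fin M), μ v (y ∘ ⇑π)
      = (M.factorial : ℝ) * ∑ w ∈ Yset M j, μ w y := by
    rw [← sum_group hμ j]
    rw [Finset.sum_congr rfl (fun w hw => sum_perm_const hμ hv hw)]
    rw [Finset.sum_const, nsmul_eq_mul]
  have hC : ((Yset M j).card : ℝ) ≠ 0 := by
    rw [card_Yset]
    exact_mod_cast (Nat.choose_pos (hj ▸ cnt_le v)).ne'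
  have hF : ((M.factorial : ℕ) : ℝ) ≠ 0 := by exact_mod_cast M.factorial_ne_zero
  rw [Egroup, ← card_Yset M j]
  field_simp
  linarith [hcard]

end core

/-- Permuted expected performance of an input-independent classifier with pmf `h`. -/
noncomputable def Perf (M : ℕ) (μ : (Fin M → Bool) → (Fin M → Bool) → ℝ)
    (y : Fin M → Bool) (h : (Fin M → Bool) → ℝ) : ℝ :=
  (1 / (M.factorial : ℝ)) *
    ∑ π : Equiv.Perm (Fin M), ∑ yhat : Fin M → Bool, h yhat * μ yhat (y ∘ ⇑π)

/-- Dutch Draw classifier `DD_j`: the uniform distribution on `Y_j`. -/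
noncomputable def DD (M j : ℕ) : (Fin M → Bool) → ℝ :=
  fun yhat => if yhat ∈ Yset M j then 1 / (M.choose j : ℝ) else 0

lemma Perf_eq {M : ℕ} {μ : (Fin M → Bool) → (Fin M → Bool) → ℝ} {y : Fin M → Bool}
    (hμ : PosInvariant M μ) (h : (Fin M → Bool) → ℝ) :
    Perf M μ y h = ∑ v : Fin M → Bool, h v * Egroup M μ y (cnt M v) := by
  rw [Perf, Finset.sum_comm, Finset.mul_sum]
  apply Finset.sum_congr rfl
  intro v _
  rw [← avg_perm_eq hμ v, ← Finset.mul_sum]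
  ring

/-- The Dutch Draw classifier at a minimizing `k` is permutation-optimal for minimization
among all input-independent classifiers. -/
theorem dutchDraw_permutation_optimal_min (M : ℕ) (hM : 1 ≤ M)
    (μ : (Fin M → Bool) → (Fin M → Bool) → ℝ) (y : Fin M → Bool)
    (hμ : PosInvariant M μ)
    (k : ℕ) (hk : k ≤ M)
    (hkmin : ∀ j ≤ M, Egroup M μ y k ≤ Egroup M μ y j)
    (h : (Fin M → Bool) → ℝ)
    (hpos : ∀ v, 0 ≤ h v) (hsum : ∑ v : Fin M → Bool, h v = 1) :
    Perf M μ y (DD M k) ≤ Perf M μ y h ∧ Perf M μ y (DD M k) = Egroup M μ y k := by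
  have hDD : Perf M μ y (DD M k) = Egroup M μ y k := by
    rw [Perf_eq hμ]
    have hz : ∑ v : Fin M → Bool, DD M k v * Egroup M μ y (cnt M v)
        = ∑ v ∈ Yset M k, DD M k v * Egroup M μ y (cnt M v) := by
      symm
      apply Finset.sum_subset (Finset.subset_univ _)
      intro v _ hv
      simp [DD, hv]
    rw [hz]
    have : ∀ v ∈ Yset M k, DD M k v * Egroup M μ y (cnt M v)
        = (1 / (M.choose k : ℝ)) * Egroup M μ y k := by
      intro v hv
      rw [DD, if_pos hv, mem_Yset_iff.mp hv]
    rw [Finset.sum_congr rfl this, Finset.sum_const, nsmul_eq_mul, card_Yset]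
    have hc : ((M.choose k : ℕ) : ℝ) ≠ 0 := by
      exact_mod_cast (Nat.choose_pos hk).ne'
    field_simp
  refine ⟨?_, hDD⟩
  rw [hDD, Perf_eq hμ]
  have : Egroup M μ y k = ∑ v : Fin M → Bool, h v * Egroup M μ y k := by
    rw [← Finset.sum_mul, hsum, one_mul]
  rw [this]
  apply Finset.sum_le_sum
  intro v _
  exact mul_le_mul_of_nonneg_left (hkmin (cnt M v) (cnt_le v)) (hpos v)
end

section
/- Fix M ≥ 1, labels y ∈ {0,1}^M, and a positional-invariant performance measure μ. For every probability mass function h on {0,1}^M, the permuted expected performance is bounded by the extremal group averages: min_{j∈{0,…,M}} E_j(y) ≤ Perf_{μ,y}(h) ≤ max_{j∈{0,…,M}} E_j(y), where E_j(y) := (1/C(M,j)) Σ_{ŷ∈Y_j} μ(ŷ, y). -/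
open Finset

namespace PerfAux

variable {M : ℕ}

/-- number of ones in a vector -/
def cnt (yhat : Fin M → Bool) : ℕ := (Finset.univ.filter (fun i => yhat i = true)).card

lemma mem_Yset_cnt (yhat : Fin M → Bool) : yhat ∈ Yset M (cnt yhat) := by
  unfold Yset; exact Finset.mem_filter.mpr ⟨Finset.mem_univ _, rfl⟩

lemma cnt_le (yhat : Fin M → Bool) : cnt yhat ≤ M := by
  simpa [cnt] using (Finset.card_filter_le (Finset.univ : Finset (Fin M))
    (fun i => yhat i = true)).trans_eq (by simp)

lemma comp_mem_Yset (yhat : Fin M → Bool) (π : Equiv.Perm (Fin M)) (j : ℕ)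
    (h : yhat ∈ Yset M j) : yhat ∘ ⇑π ∈ Yset M j := by
  simp only [Yset, mem_filter, mem_univ, true_and, Function.comp] at h ⊢
  rw [← h]
  apply Finset.card_nbij' (fun i => π i) (fun i => π.symm i)
  · intro a ha; simp only [mem_coe, mem_filter, mem_univ, true_and] at ha ⊢; exact ha
  · intro a ha; simp only [mem_coe, mem_filter, mem_univ, true_and] at ha ⊢; simpa using ha
  · intro a _; simp
  · intro a _; simp

lemma card_Yset (M j : ℕ) : (Yset M j).card = M.choose j := by
  classical
  have : (Yset M j).card = (Finset.powersetCard j (Finset.univ : Finset (Fin M))).card := by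
    apply Finset.card_nbij' (fun v => Finset.univ.filter (fun i => v i = true))
      (fun s => fun i => decide (i ∈ s))
    · intro v hv
      simp only [Yset, mem_coe, mem_filter, mem_univ, true_and] at hv
      simp [Finset.mem_powersetCard, hv]
    · intro s hs
      simp only [mem_coe, Finset.mem_powersetCard] at hs
      simp only [Yset, mem_coe, mem_filter, mem_univ, true_and]
      rw [← hs.2]
      congr 1
      ext i
      simp
    · intro v _
      funext i
      by_cases hvi : v i = true
      · simp [hvi]
      · simp only [Bool.not_eq_true] at hvi; simp [hvi]
    · intro s _
      ext i
      simp
  rw [this, Finset.card_powersetCard]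
  simp

lemma exists_perm (yhat v : Fin M → Bool) (j : ℕ) (hy : yhat ∈ Yset M j) (hv : v ∈ Yset M j) :
    ∃ σ : Equiv.Perm (Fin M), yhat ∘ ⇑σ = v := by
  classical
  simp only [Yset, mem_filter, mem_univ, true_and] at hy hv
  have hc1 : Fintype.card {i // v i = true} = Fintype.card {i // yhat i = true} := by
    rw [Fintype.card_subtype, Fintype.card_subtype, hy, hv]
  have hc2 : Fintype.card {i // ¬ v i = true} = Fintype.card {i // ¬ yhat i = true} := by
    rw [Fintype.card_subtype_compl, Fintype.card_subtype_compl, hc1]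
  let e := Fintype.equivOfCardEq hc1
  let f := Fintype.equivOfCardEq hc2
  refine ⟨(Equiv.sumCompl (fun i => v i = true)).symm.trans
    ((e.sumCongr f).trans (Equiv.sumCompl (fun i => yhat i = true))), ?_⟩
  funext i
  simp only [Function.comp, Equiv.trans_apply]
  by_cases hvi : v i = true
  · rw [Equiv.sumCompl_symm_apply_of_pos (p := fun i => v i = true) hvi]
    simp only [Equiv.sumCongr_apply, Sum.map_inl, Equiv.sumCompl_apply_inl]
    rw [(e ⟨i, hvi⟩).property, hvi]
  · rw [Equiv.sumCompl_symm_apply_of_neg (p := fun i => v i = true) hvi]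
    simp only [Equiv.sumCongr_apply, Sum.map_inr, Equiv.sumCompl_apply_inr]
    have h1 := (f ⟨i, hvi⟩).property
    simp only [Bool.not_eq_true] at h1 hvi
    rw [h1, hvi]

lemma fiber_card (yhat v : Fin M → Bool) (σ : Equiv.Perm (Fin M)) (hσ : yhat ∘ ⇑σ = v) :
    (Finset.univ.filter (fun π : Equiv.Perm (Fin M) => yhat ∘ ⇑π = v)).card
      = (Finset.univ.filter (fun π : Equiv.Perm (Fin M) => yhat ∘ ⇑π = yhat)).card := by
  apply Finset.card_nbij' (fun π => σ.symm.trans π) (fun τ => σ.trans τ)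
  · intro π hπ
    simp only [mem_coe, mem_filter, mem_univ, true_and] at hπ ⊢
    funext i
    have : yhat (π (σ.symm i)) = v (σ.symm i) := congrFun hπ (σ.symm i)
    have h2 : v (σ.symm i) = yhat (σ (σ.symm i)) := (congrFun hσ (σ.symm i)).symm
    rw [show π (σ.symm i) = (σ.symm.trans π) i from rfl] at this
    simp only [Function.comp]
    rw [this, h2, Equiv.apply_symm_apply]
  · intro τ hτ
    simp only [mem_coe, mem_filter, mem_univ, true_and] at hτ ⊢
    funext i
    have : yhat (τ (σ i)) = yhat (σ i) := congrFun hτ (σ i)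
    have h2 : yhat (σ i) = v i := congrFun hσ i
    simpa using this.trans h2
  · intro π _; ext i; simp
  · intro τ _; ext i; simp

end PerfAux
namespace PerfAux

lemma avg_eq (μ : (Fin M → Bool) → (Fin M → Bool) → ℝ) (hμ : PosInvariant M μ)
    (y yhat : Fin M → Bool) :
    (1 / (M.factorial : ℝ)) * ∑ π : Equiv.Perm (Fin M), μ yhat (y ∘ ⇑π)
      = Egroup M μ y (cnt yhat) := by
  classical
  set j := cnt yhat with hj
  -- Step 1: rewrite each term using invariance
  have step1 : ∀ π : Equiv.Perm (Fin M), μ yhat (y ∘ ⇑π) = μ (yhat ∘ ⇑π⁻¹) y := by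
    intro π
    have := hμ π⁻¹ yhat (y ∘ ⇑π)
    have hy : (y ∘ ⇑π) ∘ ⇑π⁻¹ = y := by
      funext i; simp
    rw [hy] at this
    exact this.symm
  have step1' : ∑ π : Equiv.Perm (Fin M), μ yhat (y ∘ ⇑π)
      = ∑ π : Equiv.Perm (Fin M), μ (yhat ∘ ⇑π) y := by
    rw [Finset.sum_congr rfl (fun π _ => step1 π)]
    exact Equiv.sum_comp (Equiv.inv (Equiv.Perm (Fin M))) (fun π => μ (yhat ∘ ⇑π) y)
  -- fiber structure
  have hmaps : ∀ π : Equiv.Perm (Fin M), π ∈ (Finset.univ : Finset (Equiv.Perm (Fin M))) →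
      yhat ∘ ⇑π ∈ Yset M j := fun π _ => comp_mem_Yset yhat π j (mem_Yset_cnt yhat)
  set K := (Finset.univ.filter (fun π : Equiv.Perm (Fin M) => yhat ∘ ⇑π = yhat)).card with hK
  have hfib : ∀ v ∈ Yset M j,
      (Finset.univ.filter (fun π : Equiv.Perm (Fin M) => yhat ∘ ⇑π = v)).card = K := by
    intro v hv
    obtain ⟨σ, hσ⟩ := exists_perm yhat v j (mem_Yset_cnt yhat) hv
    exact fiber_card yhat v σ hσ
  -- total count
  have hcount : M.factorial = M.choose j * K := by
    have h1 : (Finset.univ : Finset (Equiv.Perm (Fin M))).card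
        = ∑ v ∈ Yset M j, (Finset.univ.filter
            (fun π : Equiv.Perm (Fin M) => yhat ∘ ⇑π = v)).card :=
      Finset.card_eq_sum_card_fiberwise hmaps
    rw [Finset.sum_congr rfl hfib, Finset.sum_const, smul_eq_mul, card_Yset] at h1
    rw [← h1]
    simp [Fintype.card_perm]
  -- step 2: fiberwise sum
  have step2 : ∑ π : Equiv.Perm (Fin M), μ (yhat ∘ ⇑π) y
      = (K : ℝ) * ∑ v ∈ Yset M j, μ v y := by
    rw [← Finset.sum_fiberwise_of_maps_to hmaps (fun π => μ (yhat ∘ ⇑π) y)]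
    rw [Finset.mul_sum]
    refine Finset.sum_congr rfl (fun v hv => ?_)
    have : ∀ π ∈ Finset.univ.filter (fun π : Equiv.Perm (Fin M) => yhat ∘ ⇑π = v),
        μ (yhat ∘ ⇑π) y = μ v y := by
      intro π hπ
      simp only [Finset.mem_filter] at hπ
      rw [hπ.2]
    rw [Finset.sum_congr rfl this, Finset.sum_const, hfib v hv]
    simp
  -- positivity facts
  have hKpos : 0 < K := by
    apply Finset.card_pos.mpr
    exact ⟨1, by simp⟩
  have hCpos : 0 < M.choose j := Nat.choose_pos (cnt_le yhat)
  rw [step1', step2, Egroup]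
  rw [div_mul_eq_mul_div, div_mul_eq_mul_div, one_mul, one_mul]
  rw [div_eq_div_iff (by positivity : ((M.factorial:ℝ)) ≠ 0) (ne_of_gt (Nat.cast_pos.mpr hCpos))]
  rw [hcount]
  push_cast
  ring

end PerfAux

/-- The permuted expected performance of any input-independent classifier is bounded between
the minimal and maximal group averages `E_j(y)`, `j ∈ {0,…,M}`. -/
theorem perf_bounds (M : ℕ) (hM : 1 ≤ M)
    (μ : (Fin M → Bool) → (Fin M → Bool) → ℝ) (y : Fin M → Bool)
    (hμ : PosInvariant M μ)
    (h : (Fin M → Bool) → ℝ)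
    (hpos : ∀ v, 0 ≤ h v) (hsum : ∑ v : Fin M → Bool, h v = 1) :
    (Finset.range (M + 1)).inf' (Finset.nonempty_range_add_one) (Egroup M μ y)
        ≤ Perf M μ y h
      ∧ Perf M μ y h
        ≤ (Finset.range (M + 1)).sup' (Finset.nonempty_range_add_one) (Egroup M μ y) := by
  classical
  have key : Perf M μ y h = ∑ v : Fin M → Bool, h v * Egroup M μ y (PerfAux.cnt v) := by
    unfold Perf
    rw [Finset.sum_comm, Finset.mul_sum]
    refine Finset.sum_congr rfl (fun v _ => ?_)
    calc (1 / (M.factorial : ℝ)) * ∑ π : Equiv.Perm (Fin M), h v * μ v (y ∘ ⇑π)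
        = h v * ((1 / (M.factorial : ℝ)) * ∑ π : Equiv.Perm (Fin M), μ v (y ∘ ⇑π)) := by
          rw [← Finset.mul_sum]; ring
      _ = h v * Egroup M μ y (PerfAux.cnt v) := by rw [PerfAux.avg_eq μ hμ y v]
  have hmem : ∀ v : Fin M → Bool, PerfAux.cnt v ∈ Finset.range (M + 1) := fun v =>
    Finset.mem_range.mpr (Nat.lt_succ_of_le (PerfAux.cnt_le v))
  constructor
  · rw [key]
    calc (Finset.range (M + 1)).inf' Finset.nonempty_range_add_one (Egroup M μ y)
        = ∑ v : Fin M → Bool,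
            h v * (Finset.range (M + 1)).inf' Finset.nonempty_range_add_one (Egroup M μ y) := by
          rw [← Finset.sum_mul, hsum, one_mul]
      _ ≤ ∑ v : Fin M → Bool, h v * Egroup M μ y (PerfAux.cnt v) :=
          Finset.sum_le_sum (fun v _ =>
            mul_le_mul_of_nonneg_left (Finset.inf'_le _ (hmem v)) (hpos v))
  · rw [key]
    calc ∑ v : Fin M → Bool, h v * Egroup M μ y (PerfAux.cnt v)
        ≤ ∑ v : Fin M → Bool,
            h v * (Finset.range (M + 1)).sup' Finset.nonempty_range_add_one (Egroup M μ y) :=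
          Finset.sum_le_sum (fun v _ =>
            mul_le_mul_of_nonneg_left (Finset.le_sup' _ (hmem v)) (hpos v))
      _ = (Finset.range (M + 1)).sup' Finset.nonempty_range_add_one (Egroup M μ y) := by
          rw [← Finset.sum_mul, hsum, one_mul]
end
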